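/- Let {X_n, n ≥ 1} be random variables stochastically dominated by X with E|X|^p < ∞, 1 < p < 2, let r > p, set s := (2−p)/p restricted to s ≤ (r−p)/[p(r−1)], and ℓ_k := ⌊e^{k^s}⌋. Let φ: ℝ → ℝ satisfy |φ(x)| ≤ |x|. Then ∑_{j=ℓ_k+1}^{ℓ_{k+1}} E[|φ(X_j)| 1{|φ(X_j)| > j^{1/p}/(Log j)^{r/(r−p)}}] / (ℓ_k^{1/p} (LLog ℓ_k)^{r(p−1)/[p(r−1)]}) → 0 as k → ∞. -/

import Mathlib

open MeasureTheory Filter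

noncomputable def Log (x : ℝ) : ℝ := Real.log (max x (Real.exp 1))

noncomputable def LLog (x : ℝ) : ℝ := Real.log (Real.log (max x (Real.exp (Real.exp 1))))

/-!
Stochastic domination and Markov's inequality give `P(|φ(X_j)| > u) ≤ C E|X|^p u^{-p}`, and the
layer-cake formula turns this tail bound into `E[|φ(X_j)|; |φ(X_j)| > t] ≤ C E|X|^p p/(p-1) t^{1-p}`.
At the level `t_j = j^{1/p} / (Log j)^{r/(r-p)}` this is a constant times `j^{1/p-1} (Log j)^b` with
`b = r(p-1)/(r-p)`. Hence the `k`-th block sum divided by `ℓ_k^{1/p}` is at most a constant times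
`(ℓ_{k+1} - ℓ_k)/ℓ_k · (Log ℓ_{k+1})^b ≲ k^{s-1} k^{sb} + k^{sb} e^{-k^s}`, which stays bounded
because `s (b + 1) ≤ 1` is exactly the hypothesis on `s`; the remaining factor
`(LLog ℓ_k)^{-r(p-1)/(p(r-1))}` tends to `0`.
-/

open Real Finset Topology

lemma one_le_Log (x : ℝ) : 1 ≤ Log x :=
  (le_log_iff_exp_le (by positivity)).2 (le_max_right _ _)

lemma Log_pos (x : ℝ) : 0 < Log x :=
  one_pos.trans_le (one_le_Log x)

lemma Log_mono : Monotone Log := fun _ _ h =>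
  log_le_log (by positivity) (max_le_max_right _ h)

lemma Log_le_of_le_exp {x y : ℝ} (hx : x ≤ exp y) (hy : 1 ≤ y) : Log x ≤ y :=
  (log_le_iff_le_exp (by positivity)).2 (max_le hx (exp_le_exp.2 hy))

lemma one_le_LLog (x : ℝ) : 1 ≤ LLog x := by
  have h : exp 1 ≤ log (max x (exp (exp 1))) :=
    (le_log_iff_exp_le (by positivity)).2 (le_max_right _ _)
  exact (le_log_iff_exp_le ((exp_pos 1).trans_le h)).2 h

lemma tendsto_LLog_atTop : Tendsto LLog atTop atTop :=
  tendsto_log_atTop.comp <| tendsto_log_atTop.comp <|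
    tendsto_atTop_mono (fun _ => le_max_left _ _) tendsto_id

section Moments

variable {Ω : Type*} [MeasurableSpace Ω] {μ : Measure Ω}

lemma measureReal_lt_abs_le_integral_rpow_div [IsFiniteMeasure μ] {f : Ω → ℝ} {p u : ℝ}
    (hp : 0 < p) (hu : 0 < u) (hf : Integrable (fun ω => |f ω| ^ p) μ) :
    μ.real {ω | u < |f ω|} ≤ (∫ ω, |f ω| ^ p ∂μ) / u ^ p := by
  rw [le_div_iff₀ (by positivity), mul_comm]
  calc u ^ p * μ.real {ω | u < |f ω|} ≤ u ^ p * μ.real {ω | u ^ p ≤ |f ω| ^ p} :=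
        mul_le_mul_of_nonneg_left
          (measureReal_mono fun ω (h : u < |f ω|) => rpow_le_rpow hu.le h.le hp.le)
          (by positivity)
    _ ≤ ∫ ω, |f ω| ^ p ∂μ :=
        mul_meas_ge_le_integral_of_nonneg (ae_of_all _ fun ω => by positivity) hf _

/-- Layer cake on `{t < Y}`: the levels `u ≤ t` contribute `t μ{t < Y}`, the levels `u > t`
contribute `∫_t^∞ μ{u < Y} du`. -/
lemma setLIntegral_lt_le_of_meas_lt_le {Y : Ω → ℝ} {p D t : ℝ} (hYm : Measurable Y)
    (hY0 : 0 ≤ Y) (hp : 1 < p) (hD : 0 ≤ D) (ht : 0 < t)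
    (htail : ∀ u, 0 < u → μ {ω | u < Y ω} ≤ ENNReal.ofReal (D / u ^ p)) :
    ∫⁻ ω in {ω | t < Y ω}, ENNReal.ofReal (Y ω) ∂μ ≤
      ENNReal.ofReal (D * (p / (p - 1)) * t ^ (1 - p)) := by
  set S := {ω | t < Y ω}
  have hrestrict : ∀ u, μ.restrict S {ω | u < Y ω} ≤ μ (S ∩ {ω | u < Y ω}) := fun u => by
    rw [Measure.restrict_apply (measurableSet_lt measurable_const hYm), Set.inter_comm]
  have hlow : ∫⁻ u in Set.Ioc 0 t, μ.restrict S {ω | u < Y ω} ≤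
      ENNReal.ofReal (D * t ^ (1 - p)) :=
    calc ∫⁻ u in Set.Ioc 0 t, μ.restrict S {ω | u < Y ω}
        ≤ ∫⁻ _ in Set.Ioc 0 t, ENNReal.ofReal (D / t ^ p) :=
          lintegral_mono fun u =>
            ((hrestrict u).trans (measure_mono Set.inter_subset_left)).trans (htail t ht)
      _ = ENNReal.ofReal (D * t ^ (1 - p)) := by
          rw [setLIntegral_const, volume_Ioc, sub_zero, ← ENNReal.ofReal_mul (by positivity),
            rpow_sub ht, rpow_one]
          ring_nf
  have hhigh : ∫⁻ u in Set.Ioi t, μ.restrict S {ω | u < Y ω} ≤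
      ENNReal.ofReal (D * (t ^ (1 - p) / (p - 1))) :=
    calc ∫⁻ u in Set.Ioi t, μ.restrict S {ω | u < Y ω}
        ≤ ∫⁻ u in Set.Ioi t, ENNReal.ofReal (D * u ^ (-p)) := by
          refine setLIntegral_mono (by fun_prop) fun u (hu : t < u) => ?_
          rw [rpow_neg (ht.trans hu).le, ← div_eq_mul_inv]
          exact ((hrestrict u).trans (measure_mono Set.inter_subset_right)).trans
            (htail u (ht.trans hu))
      _ = ENNReal.ofReal (∫ u in Set.Ioi t, D * u ^ (-p)) :=
          (ofReal_integral_eq_lintegral_ofReal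
            ((integrableOn_Ioi_rpow_of_lt (by linarith) ht).const_mul D)
            ((ae_restrict_mem measurableSet_Ioi).mono fun u (hu : t < u) =>
              mul_nonneg hD (rpow_nonneg (ht.trans hu).le _))).symm
      _ = ENNReal.ofReal (D * (t ^ (1 - p) / (p - 1))) := by
          rw [integral_const_mul, integral_Ioi_rpow_of_lt (by linarith) ht]
          congr 2
          rw [show -p + 1 = 1 - p by ring, show p - 1 = -(1 - p) by ring, div_neg, neg_div]
  rw [lintegral_eq_lintegral_meas_lt _ (ae_of_all _ hY0) hYm.aemeasurable,
    ← Set.Ioc_union_Ioi_eq_Ioi ht.le, lintegral_union measurableSet_Ioi Set.Ioc_disjoint_Ioi_same]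
  calc _ ≤ ENNReal.ofReal (D * t ^ (1 - p)) + ENNReal.ofReal (D * (t ^ (1 - p) / (p - 1))) :=
        add_le_add hlow hhigh
    _ = ENNReal.ofReal (D * (p / (p - 1)) * t ^ (1 - p)) := by
        have hp1 : 0 < p - 1 := sub_pos.2 hp
        rw [← ENNReal.ofReal_add (by positivity) (by positivity)]
        congr 1
        field_simp
        ring

lemma setIntegral_lt_le_of_measureReal_lt_le [IsFiniteMeasure μ] {Y : Ω → ℝ} {p D t : ℝ}
    (hYm : Measurable Y) (hY0 : 0 ≤ Y) (hp : 1 < p) (hD : 0 ≤ D) (ht : 0 < t)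
    (htail : ∀ u, 0 < u → μ.real {ω | u < Y ω} ≤ D / u ^ p) :
    ∫ ω in {ω | t < Y ω}, Y ω ∂μ ≤ D * (p / (p - 1)) * t ^ (1 - p) := by
  rw [integral_eq_lintegral_of_nonneg_ae (ae_of_all _ hY0) hYm.aestronglyMeasurable]
  refine ENNReal.toReal_le_of_le_ofReal (by have := sub_pos.2 hp; positivity) ?_
  refine setLIntegral_lt_le_of_meas_lt_le hYm hY0 hp hD ht fun u hu => ?_
  rw [← ofReal_measureReal]
  exact ENNReal.ofReal_le_ofReal (htail u hu)

lemma setIntegral_lt_abs_le_of_dominated [IsFiniteMeasure μ] {Y Z : Ω → ℝ} {p C t : ℝ}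
    (hYm : Measurable Y) (hp : 1 < p) (hC : 0 ≤ C)
    (hdom : ∀ u, 0 < u → μ.real {ω | u < |Y ω|} ≤ C * μ.real {ω | u < |Z ω|})
    (hZ : Integrable (fun ω => |Z ω| ^ p) μ) (ht : 0 < t) :
    ∫ ω in {ω | t < |Y ω|}, |Y ω| ∂μ ≤
      C * (∫ ω, |Z ω| ^ p ∂μ) * (p / (p - 1)) * t ^ (1 - p) := by
  have hp0 : 0 < p := by linarith
  refine setIntegral_lt_le_of_measureReal_lt_le hYm.abs (fun ω => abs_nonneg _) hp
    (mul_nonneg hC (integral_nonneg fun ω => by positivity)) ht fun u hu => ?_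
  rw [mul_div_assoc]
  exact (hdom u hu).trans <|
    mul_le_mul_of_nonneg_left (measureReal_lt_abs_le_integral_rpow_div hp0 hu hZ) hC

end Moments

lemma rpow_div_rpow_rpow_one_sub {x y p c : ℝ} (hx : 0 < x) (hy : 0 < y) (hp : p ≠ 0) :
    (x ^ (1 / p) / y ^ c) ^ (1 - p) = x ^ (1 / p - 1) * y ^ (c * (p - 1)) := by
  rw [div_rpow (rpow_pos_of_pos hx _).le (rpow_pos_of_pos hy _).le, ← rpow_mul hx.le,
    ← rpow_mul hy.le, div_eq_mul_inv, ← rpow_neg hy.le]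
  congr 2
  · field_simp
  · ring

lemma add_one_rpow_sub_rpow_le {x s : ℝ} (hx : 0 < x) (hs0 : 0 ≤ s) (hs1 : s ≤ 1) :
    (x + 1) ^ s - x ^ s ≤ s * x ^ (s - 1) := by
  have hbern : (1 + x⁻¹) ^ s ≤ 1 + s * x⁻¹ :=
    rpow_one_add_le_one_add_mul_self (by linarith [inv_pos.2 hx]) hs0 hs1
  calc (x + 1) ^ s - x ^ s = x ^ s * (1 + x⁻¹) ^ s - x ^ s := by
        rw [← mul_rpow hx.le (by positivity), mul_add, mul_inv_cancel₀ hx.ne', mul_one]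
    _ ≤ x ^ s * (1 + s * x⁻¹) - x ^ s := by gcongr
    _ = s * x ^ (s - 1) := by rw [rpow_sub_one hx.ne']; ring

lemma floor_exp_rpow_sub_div_le {x s : ℝ} (hx : 1 ≤ x) (hs0 : 0 < s) (hs1 : s ≤ 1) :
    (⌊exp ((x + 1) ^ s)⌋₊ - ⌊exp (x ^ s)⌋₊ : ℝ) / ⌊exp (x ^ s)⌋₊ ≤
      4 * (s * x ^ (s - 1)) + 2 * exp (-x ^ s) := by
  set A := exp (x ^ s)
  set δ := (x + 1) ^ s - x ^ s
  have hδ0 : 0 ≤ δ := sub_nonneg.2 (rpow_le_rpow (by linarith) (by linarith) hs0.le)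
  have hδ : δ ≤ s * x ^ (s - 1) := add_one_rpow_sub_rpow_le (by linarith) hs0.le hs1
  have hδ1 : δ ≤ 1 := hδ.trans <|
    mul_le_one₀ hs1 (by positivity) (rpow_le_one_of_one_le_of_nonpos hx (by linarith))
  have hexpδ : exp δ - 1 ≤ 2 * δ := by
    have h := abs_exp_sub_one_le (x := δ) (by rwa [abs_of_nonneg hδ0])
    rw [abs_of_nonneg hδ0] at h
    exact (le_abs_self _).trans h
  have hA : 2 ≤ A := by
    have := exp_one_gt_d9
    have : exp 1 ≤ A := exp_le_exp.2 (one_le_rpow hx hs0.le)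
    linarith
  have hfloor : A - 1 < ⌊A⌋₊ := Nat.sub_one_lt_floor A
  have hnum : (⌊exp ((x + 1) ^ s)⌋₊ - ⌊A⌋₊ : ℝ) ≤ A * (2 * (s * x ^ (s - 1))) + 1 :=
    calc (⌊exp ((x + 1) ^ s)⌋₊ - ⌊A⌋₊ : ℝ) ≤ exp (x ^ s + δ) - (A - 1) := by
          rw [add_sub_cancel]
          exact sub_le_sub (Nat.floor_le (exp_pos _).le) hfloor.le
      _ = A * (exp δ - 1) + 1 := by rw [exp_add]; ring
      _ ≤ A * (2 * (s * x ^ (s - 1))) + 1 := by gcongr; linarith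
  calc (⌊exp ((x + 1) ^ s)⌋₊ - ⌊A⌋₊ : ℝ) / ⌊A⌋₊ ≤ (A * (2 * (s * x ^ (s - 1))) + 1) / (A / 2) :=
        div_le_div₀ (by positivity) hnum (by positivity) (by linarith)
    _ = 4 * (s * x ^ (s - 1)) + 2 * exp (-x ^ s) := by
        rw [exp_neg]
        field_simp
        ring

lemma Log_floor_exp_add_one_rpow_le {x s : ℝ} (hx : 1 ≤ x) (hs0 : 0 < s) (hs1 : s ≤ 1) :
    Log ⌊exp ((x + 1) ^ s)⌋₊ ≤ 2 * x ^ s := by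
  have hδ := add_one_rpow_sub_rpow_le (x := x) (by linarith) hs0.le hs1
  have hxs : s * x ^ (s - 1) ≤ x ^ s :=
    (mul_le_one₀ hs1 (by positivity) (rpow_le_one_of_one_le_of_nonpos hx (by linarith))).trans
      (one_le_rpow hx hs0.le)
  exact (Log_le_of_le_exp (Nat.floor_le (exp_pos _).le)
    (one_le_rpow (by linarith) hs0.le)).trans (by linarith)

lemma floor_exp_rpow_sub_div_mul_Log_rpow_le {x s b : ℝ} (hx : 1 ≤ x) (hs0 : 0 < s) (hb : 0 ≤ b)
    (hsb : s * (b + 1) ≤ 1) :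
    (⌊exp ((x + 1) ^ s)⌋₊ - ⌊exp (x ^ s)⌋₊ : ℝ) / ⌊exp (x ^ s)⌋₊ *
        Log ⌊exp ((x + 1) ^ s)⌋₊ ^ b ≤
      2 ^ b * (4 * s + 2 * ((x ^ s) ^ b * exp (-x ^ s))) := by
  have hs1 : s ≤ 1 := by nlinarith
  have hx0 : 0 < x := by linarith
  have hpow : (x ^ s) ^ b * x ^ (s - 1) ≤ 1 := by
    rw [← rpow_mul hx0.le, ← rpow_add hx0]
    exact rpow_le_one_of_one_le_of_nonpos hx (by nlinarith)
  calc _ ≤ (4 * (s * x ^ (s - 1)) + 2 * exp (-x ^ s)) * (2 * x ^ s) ^ b :=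
        mul_le_mul (floor_exp_rpow_sub_div_le hx hs0 hs1)
          (rpow_le_rpow (Log_pos _).le (Log_floor_exp_add_one_rpow_le hx hs0 hs1) hb)
          (rpow_nonneg (Log_pos _).le _) (by positivity)
    _ = 2 ^ b * (4 * s * ((x ^ s) ^ b * x ^ (s - 1)) + 2 * ((x ^ s) ^ b * exp (-x ^ s))) := by
        rw [mul_rpow zero_le_two (by positivity)]
        ring
    _ ≤ 2 ^ b * (4 * s + 2 * ((x ^ s) ^ b * exp (-x ^ s))) := by
        gcongr 2 ^ b * (?_ + _)
        exact mul_le_of_le_one_right (by positivity) hpow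

lemma sum_Ioc_div_rpow_le {f : ℕ → ℝ} {p b K : ℝ} {m n : ℕ} (hp : 1 ≤ p) (hb : 0 ≤ b)
    (hK : 0 ≤ K) (hm : 1 ≤ m) (hmn : m ≤ n)
    (hf : ∀ j ∈ Ioc m n, f j ≤ K * ((j : ℝ) ^ (1 / p - 1) * Log j ^ b)) :
    (∑ j ∈ Ioc m n, f j) / (m : ℝ) ^ (1 / p) ≤ K * ((n - m : ℝ) / m * Log n ^ b) := by
  have hm0 : (0 : ℝ) < m := by exact_mod_cast hm
  have hterm : ∀ j ∈ Ioc m n, f j ≤ K * ((m : ℝ) ^ (1 / p - 1) * Log n ^ b) := by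
    intro j hj
    obtain ⟨hmj, hjn⟩ := mem_Ioc.1 hj
    refine (hf j hj).trans (mul_le_mul_of_nonneg_left ?_ hK)
    refine mul_le_mul ?_ ?_ (rpow_nonneg (Log_pos _).le _) (by positivity)
    · refine rpow_le_rpow_of_nonpos hm0 (by exact_mod_cast hmj.le) ?_
      rw [sub_nonpos, div_le_one (by linarith)]
      exact hp
    · exact rpow_le_rpow (Log_pos _).le (Log_mono (by exact_mod_cast hjn)) hb
  have hsum := sum_le_card_nsmul _ _ _ hterm
  rw [Nat.card_Ioc, nsmul_eq_mul, Nat.cast_sub hmn] at hsum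
  calc (∑ j ∈ Ioc m n, f j) / (m : ℝ) ^ (1 / p)
      ≤ (n - m : ℝ) * (K * ((m : ℝ) ^ (1 / p - 1) * Log n ^ b)) / (m : ℝ) ^ (1 / p) := by
        gcongr
    _ = K * ((n - m : ℝ) / m * Log n ^ b) := by
        rw [rpow_sub_one hm0.ne']
        field_simp

theorem tendsto_sum_Ioc_floor_exp_rpow_div {p a b s K : ℝ} (hp : 1 ≤ p) (ha : 0 < a)
    (hb : 0 ≤ b) (hs : 0 < s) (hsb : s * (b + 1) ≤ 1) (hK : 0 ≤ K)
    (ℓ : ℕ → ℕ) (hℓ : ∀ k : ℕ, ℓ k = ⌊exp ((k : ℝ) ^ s)⌋₊) (f : ℕ → ℝ) (hf0 : ∀ j, 0 ≤ f j)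
    (hf : ∀ j, 1 ≤ j → f j ≤ K * ((j : ℝ) ^ (1 / p - 1) * Log j ^ b)) :
    Tendsto (fun k : ℕ => (∑ j ∈ Ioc (ℓ k) (ℓ (k + 1)), f j) /
      ((ℓ k : ℝ) ^ (1 / p) * LLog (ℓ k) ^ a)) atTop (𝓝 0) := by
  have hℓ1 : ∀ k, 1 ≤ ℓ k := fun k => by
    rw [hℓ, Nat.one_le_floor_iff]
    exact one_le_exp (by positivity)
  have hℓmono : ∀ k, ℓ k ≤ ℓ (k + 1) := fun k => by
    rw [hℓ, hℓ]
    gcongr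
    exact_mod_cast k.le_succ
  have hℓtop : Tendsto (fun k => (ℓ k : ℝ)) atTop atTop := by
    refine tendsto_atTop_mono (fun k => (hℓ k ▸ Nat.sub_one_lt_floor _).le) ?_
    exact tendsto_atTop_add_const_right _ _ <| tendsto_exp_atTop.comp <|
      (tendsto_rpow_atTop hs).comp tendsto_natCast_atTop_atTop
  have hbound : ∀ k : ℕ, 1 ≤ k → (∑ j ∈ Ioc (ℓ k) (ℓ (k + 1)), f j) /
      ((ℓ k : ℝ) ^ (1 / p) * LLog (ℓ k) ^ a) ≤
      K * (2 ^ b * (4 * s + 2 * (((k : ℝ) ^ s) ^ b * exp (-(k : ℝ) ^ s)))) /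
        LLog (ℓ k) ^ a := by
    intro k hk
    have hLLog : 0 < LLog (ℓ k) ^ a := rpow_pos_of_pos (one_pos.trans_le (one_le_LLog _)) _
    rw [← div_div]
    gcongr
    refine (sum_Ioc_div_rpow_le hp hb hK (hℓ1 k) (hℓmono k)
      fun j hj => hf j ((hℓ1 k).trans (mem_Ioc.1 hj).1.le)).trans ?_
    refine mul_le_mul_of_nonneg_left ?_ hK
    rw [hℓ, hℓ]
    push_cast
    exact floor_exp_rpow_sub_div_mul_Log_rpow_le (by exact_mod_cast hk) hs hb hsb
  have hnum : Tendsto (fun k : ℕ => K * (2 ^ b * (4 * s + 2 * (((k : ℝ) ^ s) ^ b *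
      exp (-(k : ℝ) ^ s))))) atTop (𝓝 (K * (2 ^ b * (4 * s + 2 * 0)))) := by
    have h := (tendsto_rpow_mul_exp_neg_mul_atTop_nhds_zero b 1 one_pos).comp <|
      (tendsto_rpow_atTop hs).comp tendsto_natCast_atTop_atTop
    simp only [Function.comp_def, neg_one_mul] at h
    exact ((h.const_mul 2).const_add _ |>.const_mul _).const_mul _
  refine squeeze_zero' (Eventually.of_forall fun k => ?_) (eventually_atTop.2 ⟨1, hbound⟩)
    (hnum.div_atTop ((tendsto_rpow_atTop ha).comp (tendsto_LLog_atTop.comp hℓtop)))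
  exact div_nonneg (sum_nonneg fun j _ => hf0 j)
    (mul_nonneg (by positivity) (rpow_nonneg (one_pos.trans_le (one_le_LLog _)).le _))

lemma mul_div_add_one_le_one {p r s : ℝ} (hp : 1 < p) (hr : p < r)
    (hs : s ≤ (r - p) / (p * (r - 1))) : s * (r * (p - 1) / (r - p) + 1) ≤ 1 := by
  have hrp : r - p ≠ 0 := by linarith
  have hr1 : r - 1 ≠ 0 := by linarith
  have hp0 : p ≠ 0 := by linarith
  calc s * (r * (p - 1) / (r - p) + 1) = s * (p * (r - 1) / (r - p)) := by
        congr 1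
        field_simp
        ring
    _ ≤ (r - p) / (p * (r - 1)) * (p * (r - 1) / (r - p)) :=
        mul_le_mul_of_nonneg_right hs (div_pos (by nlinarith) (by linarith)).le
    _ = 1 := by field_simp

theorem stmt_19_general {Ω : Type*} [MeasurableSpace Ω] (μ : Measure Ω) [IsProbabilityMeasure μ]
    (p r : ℝ) (hp1 : 1 < p) (hp2 : p < 2) (hr : p < r)
    (X : ℕ → Ω → ℝ) (hXm : ∀ n, Measurable (X n))
    (Xd : Ω → ℝ)
    (C : ℝ) (hC : 0 < C)
    (hdom : ∀ n : ℕ, ∀ t : ℝ, 0 < t →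
      (μ {ω | t < |X n ω|}).toReal ≤ C * (μ {ω | t < |Xd ω|}).toReal)
    (hXp : Integrable (fun ω => |Xd ω| ^ p) μ)
    (s : ℝ) (hs : s = (2 - p) / p) (hs' : s ≤ (r - p) / (p * (r - 1)))
    (ℓ : ℕ → ℕ) (hℓ : ∀ k : ℕ, ℓ k = Nat.floor (Real.exp ((k : ℝ) ^ s)))
    (φ : ℝ → ℝ) (hφm : Measurable φ) (hφ : ∀ x : ℝ, |φ x| ≤ |x|) :
    Tendsto (fun k : ℕ =>
      (∑ j ∈ Finset.Ioc (ℓ k) (ℓ (k + 1)),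
        ∫ ω in {ω | (j : ℝ) ^ (1 / p) / Log j ^ (r / (r - p)) < |φ (X j ω)|},
          |φ (X j ω)| ∂μ) /
        ((ℓ k : ℝ) ^ (1 / p) * LLog (ℓ k : ℝ) ^ (r * (p - 1) / (p * (r - 1)))))
      atTop (nhds 0) := by
  have hp0 : 0 < p := by linarith
  have hp1' : 0 < p - 1 := by linarith
  have hφdom : ∀ j u, 0 < u →
      μ.real {ω | u < |φ (X j ω)|} ≤ C * μ.real {ω | u < |Xd ω|} := fun j u hu =>
    (measureReal_mono fun ω (h : u < |φ (X j ω)|) => h.trans_le (hφ _)).trans (hdom j u hu)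
  have hK : 0 ≤ C * (∫ ω, |Xd ω| ^ p ∂μ) * (p / (p - 1)) :=
    mul_nonneg (mul_nonneg hC.le (integral_nonneg fun ω => by positivity)) (div_pos hp0 hp1').le
  refine tendsto_sum_Ioc_floor_exp_rpow_div hp1.le
    (div_pos (mul_pos (by linarith) hp1') (mul_pos hp0 (by linarith)))
    (div_pos (mul_pos (by linarith) hp1') (by linarith)).le
    (by rw [hs]; exact div_pos (by linarith) hp0) (mul_div_add_one_le_one hp1 hr hs') hK
    ℓ hℓ _ (fun j => integral_nonneg fun ω => abs_nonneg _) fun j hj => ?_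
  have hj0 : (0 : ℝ) < j := by exact_mod_cast hj
  refine (setIntegral_lt_abs_le_of_dominated (hφm.comp (hXm j)) hp1 hC.le (hφdom j) hXp
    (div_pos (rpow_pos_of_pos hj0 _) (rpow_pos_of_pos (Log_pos _) _))).trans_eq ?_
  rw [rpow_div_rpow_rpow_one_sub hj0 (Log_pos _) hp0.ne', div_mul_eq_mul_div]

theorem stmt_19 {Ω : Type*} [MeasurableSpace Ω] (μ : Measure Ω) [IsProbabilityMeasure μ]
    (p r : ℝ) (hp1 : 1 < p) (hp2 : p < 2) (hr : p < r)
    (X : ℕ → Ω → ℝ) (hXm : ∀ n, Measurable (X n))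
    (Xd : Ω → ℝ) (hXdm : Measurable Xd)
    (C : ℝ) (hC : 0 < C)
    (hdom : ∀ n : ℕ, ∀ t : ℝ, 0 < t →
      (μ {ω | t < |X n ω|}).toReal ≤ C * (μ {ω | t < |Xd ω|}).toReal)
    (hXp : Integrable (fun ω => |Xd ω| ^ p) μ)
    (s : ℝ) (hs : s = (2 - p) / p) (hs' : s ≤ (r - p) / (p * (r - 1)))
    (ℓ : ℕ → ℕ) (hℓ : ∀ k : ℕ, ℓ k = Nat.floor (Real.exp ((k : ℝ) ^ s)))
    (φ : ℝ → ℝ) (hφm : Measurable φ) (hφ : ∀ x : ℝ, |φ x| ≤ |x|) :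
    Tendsto (fun k : ℕ =>
      (∑ j ∈ Finset.Ioc (ℓ k) (ℓ (k + 1)),
        ∫ ω in {ω | (j : ℝ) ^ (1 / p) / Log j ^ (r / (r - p)) < |φ (X j ω)|},
          |φ (X j ω)| ∂μ) /
        ((ℓ k : ℝ) ^ (1 / p) * LLog (ℓ k : ℝ) ^ (r * (p - 1) / (p * (r - 1)))))
      atTop (nhds 0) :=
  stmt_19_general μ p r hp1 hp2 hr X hXm Xd C hC hdom hXp s hs hs' ℓ hℓ φ hφm hφ
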